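/- arXiv:2509.23083 — 3 statements merged into one kernel-verified Lean document; each statement's English description precedes it below -/
import Mathlib

section
/- If there exist real numbers p, q ≥ 0 with p² + q² = 2 such that ((1+ε)/2)^(k/2) + ((1−ε)/2)^(k/2) = p and the relation p² + q² = 2 holds with q = ((1+ε)/2)^(k/2) − ((1−ε)/2)^(k/2), then (1+ε)^k + (1−ε)^k = 2^k; for integer k ≥ 2 and 0 < ε < 1 this is impossible, hence a single measurement M_±(ε', n̂) cannot reproduce k ≥ 2 repeated measurements M_±(ε, n̂)^k unless ε = 0 or ε = 1. -/
/-! By the parallelogram law the squares of the two coefficients add up to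
`2 ((1+ε)^k + (1−ε)^k) / 2^k`. Since (1 + ε) + (1 − ε) = 2, the identity
(1+ε)^k + (1−ε)^k = 2^k would be equality in `x^k + y^k ≤ (x + y)^k`, which is strict
for `x, y > 0` and `k ≥ 2`. -/

noncomputable section

/-- ε̃₊^(k) = ((1+ε)/2)^(k/2) + ((1−ε)/2)^(k/2). -/
def epsTildePlus (ε : ℝ) (k : ℕ) : ℝ :=
  ((1 + ε) / 2) ^ ((k : ℝ) / 2) + ((1 - ε) / 2) ^ ((k : ℝ) / 2)

/-- ε̃₋^(k) = ((1+ε)/2)^(k/2) − ((1−ε)/2)^(k/2). -/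
def epsTildeMinus (ε : ℝ) (k : ℕ) : ℝ :=
  ((1 + ε) / 2) ^ ((k : ℝ) / 2) - ((1 - ε) / 2) ^ ((k : ℝ) / 2)

theorem pow_add_pow_lt {R : Type*} [CommSemiring R] [PartialOrder R] [IsStrictOrderedRing R]
    {x y : R} (hx : 0 < x) (hy : 0 < y) {n : ℕ} (hn : 2 ≤ n) :
    x ^ n + y ^ n < (x + y) ^ n := by
  induction n, hn using Nat.le_induction with
  | base =>
    rw [add_sq, add_right_comm]
    exact lt_add_of_pos_right _ (mul_pos (mul_pos two_pos hx) hy)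
  | succ n _ ih =>
    calc x ^ (n + 1) + y ^ (n + 1)
        < x ^ (n + 1) + y ^ (n + 1) + (x * y ^ n + y * x ^ n) :=
          lt_add_of_pos_right _ (add_pos (mul_pos hx (pow_pos hy n)) (mul_pos hy (pow_pos hx n)))
      _ = (x + y) * (x ^ n + y ^ n) := by ring
      _ < (x + y) * (x + y) ^ n := by gcongr
      _ = (x + y) ^ (n + 1) := by ring

theorem rpow_natCast_div_two_sq {x : ℝ} (hx : 0 ≤ x) (k : ℕ) :
    (x ^ ((k : ℝ) / 2)) ^ 2 = x ^ k := by
  rw [← Real.rpow_mul_natCast hx, Nat.cast_ofNat, div_mul_cancel₀ _ two_ne_zero, Real.rpow_natCast]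

theorem epsTildePlus_sq_add_epsTildeMinus_sq {ε : ℝ} (hε0 : 0 ≤ ε) (hε1 : ε ≤ 1) (k : ℕ) :
    epsTildePlus ε k ^ 2 + epsTildeMinus ε k ^ 2 = 2 * ((1 + ε) ^ k + (1 - ε) ^ k) / 2 ^ k := by
  have hplus := rpow_natCast_div_two_sq (x := (1 + ε) / 2) (by linarith) k
  have hminus := rpow_natCast_div_two_sq (x := (1 - ε) / 2) (by linarith) k
  rw [div_pow] at hplus hminus
  unfold epsTildePlus epsTildeMinus
  linear_combination 2 * hplus + 2 * hminus

theorem epsTilde_sq_add_sq_eq_two_iff {ε : ℝ} (hε0 : 0 ≤ ε) (hε1 : ε ≤ 1) (k : ℕ) :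
    epsTildePlus ε k ^ 2 + epsTildeMinus ε k ^ 2 = 2 ↔ (1 + ε) ^ k + (1 - ε) ^ k = 2 ^ k := by
  rw [epsTildePlus_sq_add_epsTildeMinus_sq hε0 hε1, div_eq_iff (by positivity)]
  constructor <;> intro h <;> linarith

theorem no_single_measurement_general (ε : ℝ) (k : ℕ) (hε0 : 0 ≤ ε) (hε1 : ε ≤ 1) :
    ((epsTildePlus ε k) ^ 2 + (epsTildeMinus ε k) ^ 2 = 2 →
      (1 + ε) ^ k + (1 - ε) ^ k = (2 : ℝ) ^ k) ∧
    (2 ≤ k → 0 < ε → ε < 1 →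
      (epsTildePlus ε k) ^ 2 + (epsTildeMinus ε k) ^ 2 ≠ 2) := by
  simp only [ne_eq, epsTilde_sq_add_sq_eq_two_iff hε0 hε1]
  refine ⟨id, fun hk _ hε1' => ?_⟩
  have hlt := pow_add_pow_lt (x := 1 + ε) (y := 1 - ε) (by linarith) (by linarith) hk
  rw [add_add_sub_cancel, one_add_one_eq_two] at hlt
  exact hlt.ne

/-- matching both coefficients of a single measurement requires
(ε̃₊^(k))² + (ε̃₋^(k))² = 2, which is equivalent to (1+ε)^k + (1−ε)^k = 2^k,
and for integer k ≥ 2 and 0 < ε < 1 this is impossible. -/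
theorem no_single_measurement (ε : ℝ) (k : ℕ) (hε0 : 0 ≤ ε) (hε1 : ε ≤ 1) (hk : 1 ≤ k) :
    ((epsTildePlus ε k) ^ 2 + (epsTildeMinus ε k) ^ 2 = 2 →
      (1 + ε) ^ k + (1 - ε) ^ k = (2 : ℝ) ^ k) ∧
    (2 ≤ k → 0 < ε → ε < 1 →
      (epsTildePlus ε k) ^ 2 + (epsTildeMinus ε k) ^ 2 ≠ 2) :=
  no_single_measurement_general ε k hε0 hε1
end
end

section
/- For two single-qubit density matrices ρ and σ (2×2 positive semidefinite matrices with trace 1), the Uhlmann fidelity satisfies F(ρ,σ) = Tr(ρσ) + 2√(det(ρ)·det(σ)). -/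
/-! For a `2 × 2` matrix `T`, Cayley–Hamilton gives `(tr T)² = tr (T²) + 2 det T`. Take
`T = √(√ρ σ √ρ)`: then `tr (T²) = tr (√ρ σ √ρ) = tr (ρ σ)` by cyclicity, and
`det T = √(det (√ρ σ √ρ)) = √(det ρ · det σ)`. The square root used in the statement agrees with
`CFC.sqrt`, which lets Mathlib's continuous functional calculus supply the facts about `√`. -/

open Matrix
open scoped ComplexOrder

noncomputable section

namespace Matrix.PosSemidef

/-- The positive semidefinite square root of a positive semidefinite matrix
(the definition Mathlib had in December 2024, since removed). -/
def sqrt {n : Type*} {𝕜 : Type*} [Fintype n] [RCLike 𝕜] [DecidableEq n]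
    {A : Matrix n n 𝕜} (hA : A.PosSemidef) : Matrix n n 𝕜 :=
  hA.1.eigenvectorUnitary.1 * diagonal ((↑) ∘ (√·) ∘ hA.1.eigenvalues) *
  (star hA.1.eigenvectorUnitary : Matrix n n 𝕜)

end Matrix.PosSemidef

open scoped MatrixOrder

lemma Matrix.sq_trace_fin_two {R : Type*} [CommRing R] (T : Matrix (Fin 2) (Fin 2) R) :
    T.trace ^ 2 = (T * T).trace + 2 * T.det := by
  simp only [trace_fin_two, det_fin_two, mul_apply, Fin.sum_univ_two]
  ring

lemma RCLike.re_mul_of_nonneg {K : Type*} [RCLike K] {z : K} (hz : 0 ≤ z) (w : K) :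
    re (z * w) = re z * re w := by
  simp [mul_re, (nonneg_iff.1 hz).2]

namespace Matrix.PosSemidef

variable {n 𝕜 : Type*} [Fintype n] [RCLike 𝕜] [DecidableEq n] {A : Matrix n n 𝕜}

lemma sqrt_eq_cfcSqrt (hA : A.PosSemidef) : hA.sqrt = CFC.sqrt A := by
  rw [CFC.sqrt_eq_real_sqrt A hA.nonneg, cfcₙ_eq_cfc, hA.1.cfc_eq]
  rfl

lemma det_cfcSqrt (hA : A.PosSemidef) : (CFC.sqrt A).det = (√(RCLike.re A.det) : 𝕜) := by
  rw [hA.det_sqrt, RCLike.sqrt_of_nonneg hA.det_nonneg]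

lemma trace_cfcSqrt_mul_mul_cfcSqrt (hA : A.PosSemidef) (B : Matrix n n 𝕜) :
    (CFC.sqrt A * B * CFC.sqrt A).trace = (A * B).trace := by
  rw [trace_mul_cycle, CFC.sqrt_mul_sqrt_self A hA.nonneg]

lemma det_cfcSqrt_mul_mul_cfcSqrt (hA : A.PosSemidef) (B : Matrix n n 𝕜) :
    (CFC.sqrt A * B * CFC.sqrt A).det = A.det * B.det := by
  rw [det_mul, det_mul, mul_right_comm, ← det_mul, CFC.sqrt_mul_sqrt_self A hA.nonneg]

end Matrix.PosSemidef

theorem qubit_fidelity_formula_general (ρ σ : Matrix (Fin 2) (Fin 2) ℂ)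
    (hρ : ρ.PosSemidef) (hσ : σ.PosSemidef) :
    ((hσ.conjTranspose_mul_mul_same hρ.sqrt).sqrt.trace) ^ 2
      = (ρ * σ).trace + 2 * (Real.sqrt (ρ.det.re * σ.det.re) : ℂ) := by
  have hM := hσ.conjTranspose_mul_mul_same hρ.sqrt
  rw [hM.sqrt_eq_cfcSqrt, sq_trace_fin_two, CFC.sqrt_mul_sqrt_self _ hM.nonneg, hM.det_cfcSqrt,
    hρ.sqrt_eq_cfcSqrt, (CFC.sqrt_nonneg ρ).posSemidef.isHermitian.eq,
    hρ.trace_cfcSqrt_mul_mul_cfcSqrt, hρ.det_cfcSqrt_mul_mul_cfcSqrt,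
    RCLike.re_mul_of_nonneg hρ.det_nonneg]
  rfl

/-- for single-qubit density matrices ρ, σ, the Uhlmann fidelity
F(ρ,σ) = (Tr √(√ρ σ √ρ))² equals Tr(ρσ) + 2√(det ρ · det σ).
(√ρ is Hermitian, so √ρᴴ σ √ρ = √ρ σ √ρ.) -/
theorem qubit_fidelity_formula (ρ σ : Matrix (Fin 2) (Fin 2) ℂ)
    (hρ : ρ.PosSemidef) (hσ : σ.PosSemidef) (hρ1 : ρ.trace = 1) (hσ1 : σ.trace = 1) :
    ((hσ.conjTranspose_mul_mul_same hρ.sqrt).sqrt.trace) ^ 2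
      = (ρ * σ).trace + 2 * (Real.sqrt (ρ.det.re * σ.det.re) : ℂ) :=
  qubit_fidelity_formula_general ρ σ hρ hσ
end
end

section
/- For the Bell state |Φ⁺⟩ = (|00⟩+|11⟩)/√2 evolved by U = SWAP·CNOT after a system measurement M₊(ε,n̂), the product-state-matching conditions force ζ_x = ε n_x, ζ_y = n_y(√(1−ε²)−1)/ε, and ζ_z = [n_z² + (1−n_z²)√(1−ε²)]/(ε n_z); the constraint |ζ⃗| ≤ 1 together with n_x²+n_y²+n_z² = 1 forces ε = 1, and then ζ⃗ = (n_x, −n_y, n_z). -/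
/-!
Write `s = √(1 - ε²)`, so that `ε² + s² = 1`. Clearing the denominator `ε² n_z²` and using
`n_x² + n_y² + n_z² = 1`, the excess `|ζ|² - 1` becomes
`(s² + s (2 + s) (1 - s)² n_x² n_z²) / (ε² n_z²)`, which is nonnegative and vanishes only when
`s = 0`, i.e. when `ε = 1`.
-/

open Real

lemma zeta_normSq_sub_one (ε s nx ny nz : ℝ) (hε : ε ≠ 0) (hnz : nz ≠ 0)
    (hs : ε ^ 2 + s ^ 2 = 1) (hn : nx ^ 2 + ny ^ 2 + nz ^ 2 = 1) :
    (ε * nx) ^ 2 + (ny * (s - 1) / ε) ^ 2 + ((nz ^ 2 + (1 - nz ^ 2) * s) / (ε * nz)) ^ 2 - 1 =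
      (s ^ 2 + s * (2 + s) * (1 - s) ^ 2 * (nx ^ 2 * nz ^ 2)) / (ε ^ 2 * nz ^ 2) := by
  field_simp
  linear_combination
    (1 - s) ^ 2 * nz ^ 2 * hn + ((ε ^ 2 + 1 - s ^ 2) * nx ^ 2 * nz ^ 2 - nz ^ 2) * hs

lemma eq_zero_of_zeta_normSq_le_one (ε s nx ny nz : ℝ) (hε : ε ≠ 0) (hnz : nz ≠ 0)
    (hs0 : 0 ≤ s) (hs : ε ^ 2 + s ^ 2 = 1) (hn : nx ^ 2 + ny ^ 2 + nz ^ 2 = 1)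
    (hζ : (ε * nx) ^ 2 + (ny * (s - 1) / ε) ^ 2 +
      ((nz ^ 2 + (1 - nz ^ 2) * s) / (ε * nz)) ^ 2 ≤ 1) :
    s = 0 := by
  have hexcess := zeta_normSq_sub_one ε s nx ny nz hε hnz hs hn
  have hnum : s ^ 2 + s * (2 + s) * (1 - s) ^ 2 * (nx ^ 2 * nz ^ 2) ≤ 0 := by
    have hexcess_nonpos := hexcess ▸ sub_nonpos.mpr hζ
    rwa [div_le_iff₀ (by positivity), zero_mul] at hexcess_nonpos
  have hslack : 0 ≤ s * (2 + s) * (1 - s) ^ 2 * (nx ^ 2 * nz ^ 2) := by positivity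
  exact pow_eq_zero_iff two_ne_zero |>.mp (le_antisymm (by linarith) (sq_nonneg s))

/-- for the Bell state |Φ⁺⟩ evolved by SWAP·CNOT after a system
measurement M₊(ε,n̂), the matching conditions force ζ_x = ε n_x,
ζ_y = n_y(√(1−ε²)−1)/ε, ζ_z = [n_z² + (1−n_z²)√(1−ε²)]/(ε n_z); the constraint
|ζ⃗| ≤ 1 with n̂ a unit vector and n_z ≠ 0 forces ε = 1, in which case
ζ⃗ = (n_x, −n_y, n_z). -/
theorem bell_swap_cnot_forces_projective (ε nx ny nz : ℝ)
    (hε0 : 0 < ε) (hε1 : ε ≤ 1) (hnz : nz ≠ 0) (hn : nx ^ 2 + ny ^ 2 + nz ^ 2 = 1) :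
    (((ε * nx) ^ 2 + (ny * (Real.sqrt (1 - ε ^ 2) - 1) / ε) ^ 2 +
        ((nz ^ 2 + (1 - nz ^ 2) * Real.sqrt (1 - ε ^ 2)) / (ε * nz)) ^ 2 ≤ 1) → ε = 1) ∧
    (ε = 1 →
      ε * nx = nx ∧
      ny * (Real.sqrt (1 - ε ^ 2) - 1) / ε = -ny ∧
      (nz ^ 2 + (1 - nz ^ 2) * Real.sqrt (1 - ε ^ 2)) / (ε * nz) = nz) := by
  refine ⟨fun hζ => ?_, ?_⟩
  · have hs : ε ^ 2 + √(1 - ε ^ 2) ^ 2 = 1 := by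
      rw [sq_sqrt (by nlinarith)]; ring
    have hs0 := eq_zero_of_zeta_normSq_le_one ε _ nx ny nz hε0.ne' hnz (sqrt_nonneg _) hs hn hζ
    rw [hs0] at hs
    nlinarith
  · rintro rfl
    simp only [one_pow, sub_self, sqrt_zero]
    refine ⟨one_mul nx, by ring, ?_⟩
    field_simp
    ring
end
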